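/- arXiv:1512.00427 — 5 statements merged into one kernel-verified Lean document; each statement's English description precedes it below -/
import Mathlib

section
/- Let G be a finite abelian group of order n and let S ⊆ G be an antisymmetric set (S ∩ (−S) = ∅). If a graph H admits a rainbow embedding into the arc-coloured Cayley digraph X = Cay(G,S), then the underlying (simple) graph of X contains n pairwise edge-disjoint copies of H. In particular, if H has exactly |S| edges, then H decomposes the underlying graph of X. -/
/-- The underlying simple graph of the Cayley digraph `Cay(G,S)` on an abelian group `G`:
`x` and `y` are adjacent iff they are distinct and one of `y - x`, `x - y` lies in `S`. -/
def caySimpleGraph {G : Type} [AddCommGroup G] (S : Set G) : SimpleGraph G where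
  Adj x y := x ≠ y ∧ (y - x ∈ S ∨ x - y ∈ S)
  symm := ⟨fun _ _ h => ⟨h.1.symm, h.2.symm⟩⟩
  loopless := ⟨fun _ h => h.1 rfl⟩

/-- A rainbow embedding of a graph `H` into the arc-coloured Cayley digraph `Cay(G,S)`:
an injective map on vertices such that every edge of `H`, suitably oriented, is mapped to an
arc of the Cayley digraph (i.e. the corresponding difference lies in `S`), and no two arcs of
the image carry the same colour (the colour of an arc `(x, x+s)` being `s`). -/
def IsRainbowEmb {V G : Type} [AddCommGroup G] (H : SimpleGraph V) (S : Set G)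
    (f : V → G) : Prop :=
  Function.Injective f ∧
  (∀ ⦃u v⦄, H.Adj u v → f u - f v ∈ S ∨ f v - f u ∈ S) ∧
  (∀ ⦃u v u' v'⦄, H.Adj u v → H.Adj u' v' → f v - f u ∈ S → f v' - f u' ∈ S →
    f v - f u = f v' - f u' → u = u' ∧ v = v')

/-- `H` decomposes `G`: `G` is the edge-disjoint union of isomorphic copies of `H`,
each copy being given by an injective homomorphism of `H` into `G`, and every edge of `G`
lying in exactly one copy. -/
def Decomposes {α β : Type} (H : SimpleGraph α) (G : SimpleGraph β) : Prop :=
  ∃ (ι : Type) (f : ι → α → β),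
    (∀ i, Function.Injective (f i)) ∧
    (∀ i a b, H.Adj a b → G.Adj (f i a) (f i b)) ∧
    (∀ e ∈ G.edgeSet, ∃! q : ι × Sym2 α, q.2 ∈ H.edgeSet ∧ Sym2.map (f q.1) q.2 = e)

/-!
Translating the rainbow embedding `f` by every `g ∈ G` gives `|G|` copies of `H`. Orient each edge
of `H` so that its colour lies in `S`; by antisymmetry of `S` this orientation is unique, so an
edge of `Cay(G,S)` determines its colour and its tail. The rainbow property then recovers the edge
of `H` from the colour, and the translation from the tail: the translates are edge-disjoint. If
`H` has `|S|` edges, every colour occurs in `f(H)`, so every edge of `Cay(G,S)` is covered.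
-/

section Antisymmetric

variable {G : Type} [AddCommGroup G] {S : Set G}

theorem eq_and_eq_of_mk_eq_of_sub_mem (hS : ∀ s ∈ S, -s ∉ S) {a b a' b' : G}
    (hab : b - a ∈ S) (hab' : b' - a' ∈ S) (h : s(a, b) = s(a', b')) : a = a' ∧ b = b' := by
  rcases Sym2.eq_iff.mp h with h | ⟨rfl, rfl⟩
  · exact h
  · exact absurd (by simpa using hab') (hS _ hab)

theorem exists_eq_mk_sub_mem_of_mem_edgeSet {E : Sym2 G}
    (hE : E ∈ (caySimpleGraph S).edgeSet) : ∃ x y, E = s(x, y) ∧ y - x ∈ S := by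
  induction E with
  | h x y =>
    rcases hE.2 with h | h
    · exact ⟨x, y, rfl, h⟩
    · exact ⟨y, x, Sym2.eq_swap, h⟩

end Antisymmetric

namespace IsRainbowEmb

variable {V G : Type} [AddCommGroup G] {H : SimpleGraph V} {S : Set G} {f : V → G}

theorem translate_injective (hf : IsRainbowEmb H S f) (g : G) :
    Function.Injective (f · + g) :=
  (add_left_injective g).comp hf.1

theorem translate_adj (hf : IsRainbowEmb H S f) (g : G) {a b : V} (h : H.Adj a b) :
    (caySimpleGraph S).Adj (f a + g) (f b + g) := by
  refine ⟨fun heq => h.ne (hf.translate_injective g heq), ?_⟩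
  simpa only [add_sub_add_right_eq_sub] using (hf.2.1 h).symm

theorem exists_orientation (hf : IsRainbowEmb H S f) {e : Sym2 V} (he : e ∈ H.edgeSet) :
    ∃ u v, e = s(u, v) ∧ H.Adj u v ∧ f v - f u ∈ S := by
  induction e with
  | h u v =>
    rcases hf.2.1 he with h | h
    · exact ⟨v, u, Sym2.eq_swap, he.symm, h⟩
    · exact ⟨u, v, rfl, he, h⟩

theorem eq_of_map_translate_eq (hf : IsRainbowEmb H S f) (hS : ∀ s ∈ S, -s ∉ S)
    {g g' : G} {e e' : Sym2 V} (he : e ∈ H.edgeSet) (he' : e' ∈ H.edgeSet)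
    (h : Sym2.map (f · + g) e = Sym2.map (f · + g') e') : g = g' ∧ e = e' := by
  obtain ⟨u, v, rfl, huv, hs⟩ := hf.exists_orientation he
  obtain ⟨u', v', rfl, huv', hs'⟩ := hf.exists_orientation he'
  simp only [Sym2.map_mk] at h
  obtain ⟨hu, hv⟩ := eq_and_eq_of_mk_eq_of_sub_mem hS (by simpa using hs) (by simpa using hs') h
  have hcolour : f v - f u = f v' - f u' := by
    rw [← add_sub_add_right_eq_sub _ _ g, hu, hv, add_sub_add_right_eq_sub]
  obtain ⟨rfl, rfl⟩ := hf.2.2 huv huv' hs hs' hcolour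
  exact ⟨add_left_cancel hu, rfl⟩

/-- Colours are injective on the arcs of `f(H)` with colour in `S`, and these arcs cover the
edges of `H`; so `f(H)` uses at least `|E(H)|` colours of `S`. -/
theorem exists_adj_sub_eq (hf : IsRainbowEmb H S f) (hSfin : S.Finite)
    (hcard : H.edgeSet.ncard = S.ncard) {s : G} (hs : s ∈ S) :
    ∃ u v, H.Adj u v ∧ f v - f u = s := by
  set arcs : Set (V × V) := {p | H.Adj p.1 p.2 ∧ f p.2 - f p.1 ∈ S}
  set colour : V × V → G := fun p => f p.2 - f p.1
  have colour_mapsTo : colour '' arcs ⊆ S := by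
    rintro _ ⟨p, hp, rfl⟩
    exact hp.2
  have colour_injOn : Set.InjOn colour arcs := fun p hp q hq hpq =>
    Prod.ext_iff.mpr (hf.2.2 hp.1 hq.1 hp.2 hq.2 hpq)
  have arcs_finite : arcs.Finite :=
    Set.Finite.of_finite_image (hSfin.subset colour_mapsTo) colour_injOn
  have edgeSet_subset : H.edgeSet ⊆ (fun p => s(p.1, p.2)) '' arcs := fun e he => by
    obtain ⟨u, v, rfl, huv, huvS⟩ := hf.exists_orientation he
    exact ⟨(u, v), ⟨huv, huvS⟩, rfl⟩
  have hle : S.ncard ≤ (colour '' arcs).ncard :=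
    calc S.ncard = H.edgeSet.ncard := hcard.symm
      _ ≤ ((fun p => s(p.1, p.2)) '' arcs).ncard :=
        Set.ncard_le_ncard edgeSet_subset (arcs_finite.image _)
      _ ≤ arcs.ncard := Set.ncard_image_le arcs_finite
      _ = (colour '' arcs).ncard := colour_injOn.ncard_image.symm
  obtain ⟨⟨u, v⟩, ⟨huv, -⟩, rfl⟩ :=
    (Set.eq_of_subset_of_ncard_le colour_mapsTo hle hSfin).symm ▸ hs
  exact ⟨u, v, huv, rfl⟩

theorem exists_map_translate_eq (hf : IsRainbowEmb H S f) (hSfin : S.Finite)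
    (hcard : H.edgeSet.ncard = S.ncard) {E : Sym2 G} (hE : E ∈ (caySimpleGraph S).edgeSet) :
    ∃ g, ∃ e ∈ H.edgeSet, Sym2.map (f · + g) e = E := by
  obtain ⟨x, y, rfl, hxy⟩ := exists_eq_mk_sub_mem_of_mem_edgeSet hE
  obtain ⟨u, v, huv, hcolour⟩ := hf.exists_adj_sub_eq hSfin hcard hxy
  refine ⟨x - f u, s(u, v), huv, ?_⟩
  rw [Sym2.map_mk, add_sub_cancel, add_sub_left_comm, hcolour, add_sub_cancel]

end IsRainbowEmb

theorem rainbow_embedding_gives_decomposition_general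
    {G : Type} [AddCommGroup G] [Fintype G] {V : Type}
    (n : ℕ) (hn : Fintype.card G = n)
    (S : Finset G) (hS : ∀ s ∈ S, -s ∉ S)
    (H : SimpleGraph V) (f : V → G) (hf : IsRainbowEmb H (↑S) f) :
    (∃ c : Fin n → V → G,
      (∀ i, Function.Injective (c i)) ∧
      (∀ i a b, H.Adj a b → (caySimpleGraph (↑S : Set G)).Adj (c i a) (c i b)) ∧
      (∀ i j, i ≠ j →
        Disjoint (Sym2.map (c i) '' H.edgeSet) (Sym2.map (c j) '' H.edgeSet))) ∧
    (H.edgeSet.ncard = S.card → Decomposes H (caySimpleGraph (↑S : Set G))) := by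
  obtain σ : Fin n ≃ G := (Fintype.equivFinOfCardEq hn).symm
  refine ⟨⟨fun i v => f v + σ i, fun i => hf.translate_injective _,
    fun i _ _ h => hf.translate_adj _ h, fun i j hij => ?_⟩, fun hcard => ?_⟩
  · rw [Set.disjoint_left]
    rintro _ ⟨e, he, rfl⟩ ⟨e', he', heq⟩
    exact hij (σ.injective (hf.eq_of_map_translate_eq hS he' he heq).1).symm
  · refine ⟨G, fun g v => f v + g, hf.translate_injective, fun g _ _ h => hf.translate_adj g h,
      fun E hE => ?_⟩
    obtain ⟨g, e, he, rfl⟩ :=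
      hf.exists_map_translate_eq S.finite_toSet (by rwa [Set.ncard_coe_finset]) hE
    refine ⟨(g, e), ⟨he, rfl⟩, fun ⟨g', e'⟩ ⟨he', heq⟩ => ?_⟩
    obtain ⟨rfl, rfl⟩ := hf.eq_of_map_translate_eq hS he' he heq
    rfl

/-- If a graph `H` admits a rainbow embedding into the Cayley digraph `Cay(G,S)` on a finite
abelian group `G` of order `n`, with `S` antisymmetric, then the underlying graph of `Cay(G,S)`
contains `n` pairwise edge-disjoint copies of `H`; in particular, if `H` has exactly `|S|`
edges, then `H` decomposes the underlying graph of `Cay(G,S)`. -/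
theorem rainbow_embedding_gives_decomposition
    {G : Type} [AddCommGroup G] [Fintype G] {V : Type} [Fintype V]
    (n : ℕ) (hn : Fintype.card G = n)
    (S : Finset G) (hS : ∀ s ∈ S, -s ∉ S)
    (H : SimpleGraph V) (f : V → G) (hf : IsRainbowEmb H (↑S) f) :
    (∃ c : Fin n → V → G,
      (∀ i, Function.Injective (c i)) ∧
      (∀ i a b, H.Adj a b → (caySimpleGraph (↑S : Set G)).Adj (c i a) (c i b)) ∧
      (∀ i j, i ≠ j →
        Disjoint (Sym2.map (c i) '' H.edgeSet) (Sym2.map (c j) '' H.edgeSet))) ∧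
    (H.edgeSet.ncard = S.card → Decomposes H (caySimpleGraph (↑S : Set G))) :=
  rainbow_embedding_gives_decomposition_general n hn S hS H f hf
end

section
/- Let p > 10 be a prime and let T be a tree with k edges where k < 3(p−1)/10. Then there exists an antisymmetric set S ⊆ Z_p \ {0} with |S| = k such that T admits a rainbow embedding into the arc-coloured Cayley digraph Cay(Z_p, S). -/
/-!
Greedy leaf-by-leaf embedding. Suppose the tree minus a leaf `v` (attached to `u`) has `m - 1`
vertices and is already rainbow-embedded by `f` with an antisymmetric colour set `S` of size
`m - 2`. Place `v` at any point `c` that avoids the `m - 1` occupied points and the `2(m - 2)`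
points `f u ± s` with `s ∈ S`, and colour the new arc `u → v` by `d = c - f u`. Then `d ∉ S`,
`-d ∉ S`, and `d ≠ -d` because `G` has odd order, so `insert d S` is again antisymmetric and the
embedding stays rainbow. Such a `c` exists whenever `3m - 5 < |G|`, which for `G = ℤ_p` and a tree
with `m = k + 1` vertices follows from `10k < 3(p - 1)`.
-/

open SimpleGraph

open Finset

theorem SimpleGraph.IsTree.induce_compl_singleton_of_degree_eq_one {V : Type*}
    {T : SimpleGraph V} (hT : T.IsTree) {v : V} [Fintype (T.neighborSet v)]
    (hv : T.degree v = 1) : (T.induce {v}ᶜ).IsTree :=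
  ⟨hT.connected.induce_compl_singleton_of_degree_eq_one hv, hT.isAcyclic.induce _⟩

theorem eq_zero_of_neg_eq_self_of_odd_card {G : Type*} [AddGroup G] [Fintype G]
    (hG : Odd (Fintype.card G)) {g : G} (h : -g = g) : g = 0 := by
  by_contra hg
  have h2 : addOrderOf g = 2 :=
    addOrderOf_eq_prime (by rw [two_nsmul]; nth_rw 1 [← h]; exact neg_add_cancel g) hg
  exact Nat.not_even_iff_odd.2 hG (even_iff_two_dvd.2 (h2 ▸ addOrderOf_dvd_card))

theorem Finset.exists_notMem_and_sub_notMem {G : Type*} [AddCommGroup G] [Fintype G]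
    [DecidableEq G] (A S : Finset G) (a : G) (h : #A + 2 * #S < Fintype.card G) :
    ∃ c ∉ A, c - a ∉ S ∧ a - c ∉ S := by
  have hcard : #(A ∪ S.image (a + ·) ∪ S.image (a - ·)) < #(univ : Finset G) := by
    have h₁ := card_union_le (A ∪ S.image (a + ·)) (S.image (a - ·))
    have h₂ := card_union_le A (S.image (a + ·))
    have h₃ : #(S.image (a + ·)) ≤ #S := card_image_le
    have h₄ : #(S.image (a - ·)) ≤ #S := card_image_le
    rw [card_univ]
    omega
  obtain ⟨c, -, hc⟩ := exists_mem_notMem_of_card_lt_card hcard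
  simp only [mem_union, mem_image, not_or, not_exists, not_and] at hc
  exact ⟨c, hc.1.1, fun hs => hc.1.2 _ hs (by abel), fun hs => hc.2 _ hs (by abel)⟩

theorem isRainbowEmb_of_subsingleton {V G : Type} [AddCommGroup G] [Subsingleton V]
    (H : SimpleGraph V) (S : Set G) (f : V → G) : IsRainbowEmb H S f :=
  ⟨Function.injective_of_subsingleton f, fun u v h => (h.ne (Subsingleton.elim u v)).elim,
    fun u v _ _ h => (h.ne (Subsingleton.elim u v)).elim⟩

section LeafExtension

variable {V G : Type} [AddCommGroup G] {T : SimpleGraph V} {S : Set G} {f : V → G} {u v : V}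

theorem adj_cases_of_forall_adj_iff (hleaf : ∀ w, T.Adj v w ↔ w = u) {a b : V}
    (hab : T.Adj a b) : (a ≠ v ∧ b ≠ v) ∨ (a = v ∧ b = u) ∨ (a = u ∧ b = v) := by
  by_cases ha : a = v
  · exact Or.inr (Or.inl ⟨ha, (hleaf b).1 (ha ▸ hab)⟩)
  by_cases hb : b = v
  · exact Or.inr (Or.inr ⟨(hleaf a).1 (hb ▸ hab.symm), hb⟩)
  exact Or.inl ⟨ha, hb⟩

variable (hleaf : ∀ w, T.Adj v w ↔ w = u) (hf : IsRainbowEmb (T.induce {v}ᶜ) S fun x => f x)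
  (hd : f v - f u ∉ S) (hnd : f u - f v ∉ S) (hd₂ : f u - f v ≠ f v - f u)
include hleaf hf hd hnd hd₂

theorem eq_leaf_arc_or_sub_mem_of_sub_mem_insert {a b : V} (hab : T.Adj a b)
    (hmem : f b - f a ∈ insert (f v - f u) S) :
    (a = u ∧ b = v) ∨ (a ≠ v ∧ b ≠ v ∧ f b - f a ∈ S) := by
  rcases adj_cases_of_forall_adj_iff hleaf hab with ⟨ha, hb⟩ | ⟨rfl, rfl⟩ | huv
  · refine Or.inr ⟨ha, hb, (Set.mem_insert_iff.1 hmem).resolve_left fun heq => ?_⟩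
    rcases hf.2.1 (show (T.induce {v}ᶜ).Adj ⟨a, ha⟩ ⟨b, hb⟩ from hab) with h | h
    · exact hnd (by rwa [← neg_sub, heq, neg_sub] at h)
    · exact hd (heq ▸ h)
  · exact ((Set.mem_insert_iff.1 hmem).elim hd₂ hnd).elim
  · exact Or.inl huv

theorem IsRainbowEmb.insert_of_forall_adj_iff (hfv : ∀ x ≠ v, f x ≠ f v) :
    IsRainbowEmb T (insert (f v - f u) S) f := by
  refine ⟨fun x y hxy => ?_, fun a b hab => ?_, fun a b a' b' hab hab' hm hm' heq => ?_⟩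
  · by_cases hx : x = v <;> by_cases hy : y = v
    · rw [hx, hy]
    · exact (hfv y hy (hx ▸ hxy).symm).elim
    · exact (hfv x hx (hy ▸ hxy)).elim
    · exact congrArg Subtype.val (@hf.1 ⟨x, hx⟩ ⟨y, hy⟩ hxy)
  · rcases adj_cases_of_forall_adj_iff hleaf hab with ⟨ha, hb⟩ | ⟨rfl, rfl⟩ | ⟨rfl, rfl⟩
    · exact (hf.2.1 (show (T.induce {v}ᶜ).Adj ⟨a, ha⟩ ⟨b, hb⟩ from hab)).imp
        (Set.mem_insert_of_mem _) (Set.mem_insert_of_mem _)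
    · exact Or.inl (Set.mem_insert _ _)
    · exact Or.inr (Set.mem_insert _ _)
  · rcases eq_leaf_arc_or_sub_mem_of_sub_mem_insert hleaf hf hd hnd hd₂ hab hm with
      ⟨rfl, rfl⟩ | ⟨ha, hb, hs⟩ <;>
    rcases eq_leaf_arc_or_sub_mem_of_sub_mem_insert hleaf hf hd hnd hd₂ hab' hm' with
      ⟨rfl, rfl⟩ | ⟨ha', hb', hs'⟩
    · exact ⟨rfl, rfl⟩
    · exact (hd (heq ▸ hs')).elim
    · exact (hd (heq ▸ hs)).elim
    · have := @hf.2.2 ⟨a, ha⟩ ⟨b, hb⟩ ⟨a', ha'⟩ ⟨b', hb'⟩ hab hab' hs hs' heq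
      exact ⟨congrArg Subtype.val this.1, congrArg Subtype.val this.2⟩

end LeafExtension

theorem Finset.forall_neg_notMem_insert {G : Type*} [AddGroup G] [DecidableEq G] {S : Finset G}
    (hS : ∀ s ∈ S, -s ∉ S) {d : G} (hd : -d ∉ S) (hd₂ : -d ≠ d) :
    ∀ s ∈ insert d S, -s ∉ insert d S := by
  refine (forall_mem_insert _ _ _).2 ⟨by simp [hd, hd₂], fun s hs => ?_⟩
  simp only [mem_insert, not_or]
  exact ⟨fun h => hd (by rwa [← h, neg_neg]), hS s hs⟩

section OddOrder

variable {G : Type} [AddCommGroup G] [Fintype G] [DecidableEq G] (hG : Odd (Fintype.card G))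
include hG

theorem exists_rainbowEmb_of_leaf {V : Type} [DecidableEq V] {T : SimpleGraph V} {u v : V}
    (hleaf : ∀ w, T.Adj v w ↔ w = u) [Fintype ↥({v}ᶜ : Set V)] {S : Finset G}
    (hS₀ : ∀ s ∈ S, s ≠ 0) (hSneg : ∀ s ∈ S, -s ∉ S) {f' : ↥({v}ᶜ : Set V) → G}
    (hf' : IsRainbowEmb (T.induce {v}ᶜ) S f')
    (hcard : Fintype.card ↥({v}ᶜ : Set V) + 2 * #S < Fintype.card G) :
    ∃ S' : Finset G, (∀ s ∈ S', s ≠ 0) ∧ (∀ s ∈ S', -s ∉ S') ∧ #S' = #S + 1 ∧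
      ∃ f : V → G, IsRainbowEmb T S' f := by
  have hvu : u ≠ v := fun h => (h ▸ (hleaf u).2 rfl : T.Adj v v).ne rfl
  obtain ⟨c, hc, hcS, hSc⟩ := (univ.image f').exists_notMem_and_sub_notMem S (f' ⟨u, hvu⟩) <| by
    have := card_image_le (s := univ) (f := f')
    rw [card_univ] at this
    omega
  let f : V → G := fun x => if h : x = v then c else f' ⟨x, h⟩
  have hf : (fun x : ↥({v}ᶜ : Set V) => f x) = f' := funext fun x => dif_neg x.2
  have hfv : ∀ x ≠ v, f x ≠ f v := fun x hx h =>
    hc (mem_image.2 ⟨⟨x, hx⟩, mem_univ _, (dif_neg hx).symm.trans (h.trans (dif_pos rfl))⟩)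
  have hd : f v - f u ∉ S := by simpa [f, hvu] using hcS
  have hnd : f u - f v ∉ S := by simpa [f, hvu] using hSc
  have hd₀ : f v - f u ≠ 0 := sub_ne_zero.2 (hfv u hvu).symm
  have hd₂ : f u - f v ≠ f v - f u := fun h =>
    hd₀ (eq_zero_of_neg_eq_self_of_odd_card hG (by rwa [neg_sub]))
  refine ⟨insert (f v - f u) S, (forall_mem_insert _ _ _).2 ⟨hd₀, hS₀⟩,
    forall_neg_notMem_insert hSneg (by rwa [neg_sub]) (by rwa [neg_sub]),
    card_insert_of_notMem hd, f, ?_⟩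
  rw [coe_insert]
  exact (hf ▸ hf').insert_of_forall_adj_iff hleaf hd hnd hd₂ hfv

theorem exists_rainbowEmb_of_isTree {V : Type} [Fintype V] (T : SimpleGraph V) (hT : T.IsTree)
    (hV : 3 * Fintype.card V ≤ Fintype.card G + 4) :
    ∃ S : Finset G, (∀ s ∈ S, s ≠ 0) ∧ (∀ s ∈ S, -s ∉ S) ∧ #S + 1 = Fintype.card V ∧
      ∃ f : V → G, IsRainbowEmb T S f := by
  classical
  obtain ⟨n, hn⟩ : ∃ n, Fintype.card V = n := ⟨_, rfl⟩
  induction n generalizing V with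
  | zero => exact absurd hn (@Fintype.card_ne_zero _ _ hT.connected.nonempty)
  | succ n ih =>
    rcases subsingleton_or_nontrivial V with hV₁ | hV₁
    · have : n = 0 := by have := Fintype.card_le_one_iff_subsingleton.2 hV₁; omega
      exact ⟨∅, by simp, by simp, by simp [hn, this], 0, isRainbowEmb_of_subsingleton _ _ _⟩
    obtain ⟨v, hv⟩ := hT.exists_vert_degree_one_of_nontrivial
    obtain ⟨u, hvu, hu⟩ := degree_eq_one_iff_existsUnique_adj.1 hv
    have hcard : Fintype.card ↥({v}ᶜ : Set V) = n := by
      rw [Fintype.card_compl_set, Set.card_singleton, hn, Nat.add_sub_cancel]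
    obtain ⟨S, hS₀, hSneg, hScard, f', hf'⟩ :=
      ih (T.induce {v}ᶜ) (hT.induce_compl_singleton_of_degree_eq_one hv) (by omega) hcard
    obtain ⟨S', hS'₀, hS'neg, hS'card, f, hf⟩ := exists_rainbowEmb_of_leaf hG
      (fun w => ⟨hu w, fun h => h ▸ hvu⟩) hS₀ hSneg hf' (by omega)
    exact ⟨S', hS'₀, hS'neg, by omega, f, hf⟩

end OddOrder

/-- Let `p > 10` be a prime and `T` a tree with `k < 3(p-1)/10` edges. Then there is an
antisymmetric set `S ⊆ ℤ_p \ {0}` with `|S| = k` such that `T` admits a rainbow embedding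
into `Cay(ℤ_p, S)`. -/
theorem tree_rainbow_embedding_in_cayley
    (p k : ℕ) (hp : p.Prime) (hp10 : 10 < p)
    {V : Type} [Fintype V] (T : SimpleGraph V) (hT : T.IsTree)
    (hk : T.edgeSet.ncard = k) (hk' : 10 * k < 3 * (p - 1)) :
    ∃ S : Finset (ZMod p),
      (∀ s ∈ S, s ≠ 0) ∧ (∀ s ∈ S, -s ∉ S) ∧ S.card = k ∧
      ∃ f : V → ZMod p, IsRainbowEmb T (↑S) f := by
  classical
  have : NeZero p := ⟨hp.ne_zero⟩
  have hV : Fintype.card V = k + 1 := by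
    rw [← hT.card_edgeFinset, ← hk, edgeFinset, Set.ncard_eq_toFinset_card']
  have hodd : Odd (Fintype.card (ZMod p)) := by
    rw [ZMod.card]; exact hp.odd_of_ne_two (by omega)
  obtain ⟨S, hS₀, hSneg, hScard, f, hf⟩ :=
    exists_rainbowEmb_of_isTree hodd T hT (by rw [hV, ZMod.card]; omega)
  exact ⟨S, hS₀, hSneg, by omega, f, hf⟩
end

section
/- Let T be a tree with k edges, let x_0, x_1, …, x_k be a peeling ordering of V(T), and label the edges by variables y_1, …, y_k so that the edge labelled y_i joins x_i to the subtree T[x_0,…,x_{i−1}] for 1 ≤ i ≤ k. For 1 ≤ i ≤ k let T(0,i) be the set of indices j such that the edge labelled y_j lies on the unique path in T from x_0 to x_i. Let p be a prime and consider the polynomial P(y_1,…,y_k) = ∏_{1≤i<j≤k} (y_j² − y_i²) · ∏_{1≤i<j≤k} (Σ_{r∈T(0,i)} y_r − Σ_{s∈T(0,j)} y_s) over the field F_p. Then the coefficient in P of the monomial y_k^{3(k−1)} · y_{k−1}^{3(k−2)} ⋯ y_2^{3} · y_1^{0} equals ±1; in particular it is nonzero in F_p. -/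
/-!
Order monomials colexicographically, so that `y_k` is the most significant variable. The edges on
the path from `x_0` to `x_i` all lie in the subtree spanned by `x_0, …, x_i`, so their labels are
at most `i`; and the path must use the edge `y_i`, because in a tree every edge is a bridge and
`x_0` reaches the other end of `y_i` before `x_i` is added. Hence for `i < j` the two factors
attached to the pair `(i, j)` have leading terms `y_j²` and `-y_j`. The displayed monomial is the
product of all these leading monomials, so its coefficient is the product of the leading
coefficients, `(-1)^(k(k-1)/2)`.
-/

open MvPolynomial Finset

open scoped MonomialOrder

theorem MvPolynomial.vars_sum_X_subset {σ R : Type*} [CommRing R] [Nontrivial R] [DecidableEq σ]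
    (B : Finset σ) : (∑ r ∈ B, X r : MvPolynomial σ R).vars ⊆ B := by
  intro i hi
  obtain ⟨r, hr, hir⟩ := mem_biUnion.mp (vars_sum_subset B _ hi)
  rw [vars_X, mem_singleton] at hir
  exact hir ▸ hr

theorem MonomialOrder.coeff_prod_mul_prod_sum_degree {σ R ι : Type*} [CommRing R]
    (m : MonomialOrder σ) (s : Finset ι) (F G : ι → MvPolynomial σ R) :
    ((∏ i ∈ s, F i) * ∏ i ∈ s, G i).coeff (∑ i ∈ s, m.degree (F i) + ∑ i ∈ s, m.degree (G i)) =
      (∏ i ∈ s, m.leadingCoeff (F i)) * ∏ i ∈ s, m.leadingCoeff (G i) := by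
  rw [m.coeff_mul_of_add_of_degree_le m.degree_prod_le m.degree_prod_le, m.coeff_prod_sum_degree,
    m.coeff_prod_sum_degree]

/-- Unlike `MonomialOrder.lex`, this order makes the largest variable the most significant. -/
noncomputable def MonomialOrder.colex {σ : Type*} [LinearOrder σ] [WellFoundedLT σ] :
    MonomialOrder σ where
  syn := Colex (σ →₀ ℕ)
  toSyn := { toEquiv := toColex, map_add' := fun _ _ => rfl }
  toSyn_monotone := Finsupp.toColex_monotone

namespace MonomialOrder

variable {σ : Type*} [LinearOrder σ] [WellFoundedLT σ]

theorem colex_lt_iff {c d : σ →₀ ℕ} : c ≺[colex] d ↔ toColex c < toColex d := Iff.rfl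

theorem colex_lt_single {d : σ →₀ ℕ} {j : σ} {n : ℕ} (hd : ∀ i ∈ d.support, i < j)
    (hn : n ≠ 0) : d ≺[colex] Finsupp.single j n := by
  have hdj : ∀ i, j ≤ i → d i = 0 := fun i hi =>
    Finsupp.notMem_support_iff.mp fun h => (hd i h).not_ge hi
  refine colex_lt_iff.mpr (Finsupp.Colex.lt_iff.mpr ⟨j, fun i hi => ?_, ?_⟩)
  · simp [hdj i hi.le, Finsupp.single_eq_of_ne hi.ne']
  · simp [hdj j le_rfl, Nat.pos_of_ne_zero hn]

variable {R : Type*} [CommRing R]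

theorem colex_degree_lt_single {f : MvPolynomial σ R} {j : σ} {n : ℕ}
    (hf : ∀ i ∈ f.vars, i < j) (hn : n ≠ 0) : colex.degree f ≺[colex] Finsupp.single j n := by
  classical
  refine (degree_lt_iff (colex_lt_single (by simp) hn)).mpr fun c hc => colex_lt_single ?_ hn
  exact fun i hi => hf i ((mem_vars_iff_mem_support i).mpr ⟨c, hc, hi⟩)

theorem colex_degree_monomial_add {j : σ} {n : ℕ} {c : R} {g : MvPolynomial σ R}
    (hn : n ≠ 0) (hc : c ≠ 0) (hg : ∀ i ∈ g.vars, i < j) :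
    colex.degree (monomial (Finsupp.single j n) c + g) = Finsupp.single j n ∧
      colex.leadingCoeff (monomial (Finsupp.single j n) c + g) = c := by
  classical
  have hdeg : colex.degree (monomial (Finsupp.single j n) c) = Finsupp.single j n := by
    rw [degree_monomial, if_neg hc]
  have hlt : colex.degree g ≺[colex] colex.degree (monomial (Finsupp.single j n) c) := by
    rw [hdeg]; exact colex_degree_lt_single hg hn
  exact ⟨(degree_add_of_lt hlt).trans hdeg,
    (leadingCoeff_add_of_lt hlt).trans (leadingCoeff_monomial _)⟩

variable [Nontrivial R]

theorem colex_degree_X_sq_sub_X_sq {i j : σ} (h : i < j) :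
    colex.degree ((X j : MvPolynomial σ R) ^ 2 - X i ^ 2) = Finsupp.single j 2 ∧
      colex.leadingCoeff ((X j : MvPolynomial σ R) ^ 2 - X i ^ 2) = 1 := by
  classical
  rw [sub_eq_add_neg, X_pow_eq_monomial, X_pow_eq_monomial]
  refine colex_degree_monomial_add two_ne_zero one_ne_zero fun r hr => ?_
  rw [vars_neg, vars_monomial_single _ two_ne_zero one_ne_zero, mem_singleton] at hr
  exact hr ▸ h

theorem colex_degree_sum_X_sub_sum_X {B C : Finset σ} {j : σ} (hB : ∀ r ∈ B, r < j)
    (hC : ∀ r ∈ C, r ≤ j) (hj : j ∈ C) :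
    colex.degree ((∑ r ∈ B, X r : MvPolynomial σ R) - ∑ r ∈ C, X r) = Finsupp.single j 1 ∧
      colex.leadingCoeff ((∑ r ∈ B, X r : MvPolynomial σ R) - ∑ r ∈ C, X r) = -1 := by
  classical
  have hsplit : (∑ r ∈ B, X r : MvPolynomial σ R) - ∑ r ∈ C, X r =
      monomial (Finsupp.single j 1) (-1) + (∑ r ∈ B, X r - ∑ r ∈ C.erase j, X r) := by
    rw [← C.add_sum_erase _ hj, map_neg, ← X]
    ring
  rw [hsplit]
  refine colex_degree_monomial_add one_ne_zero (neg_ne_zero.mpr one_ne_zero) fun r hr => ?_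
  rcases mem_union.mp (vars_sub_subset _ hr) with hr | hr
  · exact hB r (vars_sum_X_subset B hr)
  · have hr := vars_sum_X_subset _ hr
    exact lt_of_le_of_ne (hC r (mem_of_mem_erase hr)) (ne_of_mem_erase hr)

theorem coeff_prod_X_sq_sub_mul_prod_sum_X_sub (s : Finset (σ × σ)) (A : σ → Finset σ)
    (hs : ∀ q ∈ s, q.1 < q.2) (hA : ∀ i, ∀ r ∈ A i, r ≤ i) (hself : ∀ q ∈ s, q.2 ∈ A q.2) :
    ((∏ q ∈ s, ((X q.2 : MvPolynomial σ R) ^ 2 - X q.1 ^ 2)) *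
        ∏ q ∈ s, ((∑ r ∈ A q.1, X r) - ∑ r ∈ A q.2, X r)).coeff
      (∑ q ∈ s, Finsupp.single q.2 3) = (-1) ^ s.card := by
  have hF q (hq : q ∈ s) := colex_degree_X_sq_sub_X_sq (R := R) (hs q hq)
  have hG q (hq : q ∈ s) := colex_degree_sum_X_sub_sum_X (R := R)
    (fun r hr => (hA q.1 r hr).trans_lt (hs q hq)) (hA q.2) (hself q hq)
  have hdeg : ∑ q ∈ s, Finsupp.single q.2 3 =
      ∑ q ∈ s, colex.degree ((X q.2 : MvPolynomial σ R) ^ 2 - X q.1 ^ 2) +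
        ∑ q ∈ s, colex.degree ((∑ r ∈ A q.1, X r : MvPolynomial σ R) - ∑ r ∈ A q.2, X r) := by
    rw [← sum_add_distrib]
    refine sum_congr rfl fun q hq => ?_
    rw [(hF q hq).1, (hG q hq).1, ← Finsupp.single_add]
  rw [hdeg, coeff_prod_mul_prod_sum_degree, prod_congr rfl fun q hq => (hF q hq).2,
    prod_congr rfl fun q hq => (hG q hq).2, prod_const_one, one_mul, prod_const]

end MonomialOrder

theorem Fin.sum_filter_ne_zero_lt_snd {M : Type*} [AddCommMonoid M] (k : ℕ)
    (f : Fin (k + 1) → M) :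
    ∑ q ∈ univ.filter (fun q : Fin (k + 1) × Fin (k + 1) => q.1 ≠ 0 ∧ q.1 < q.2), f q.2 =
      ∑ i : Fin (k + 1), (i.val - 1) • f i := by
  rw [sum_filter, Fintype.sum_prod_type, sum_comm]
  refine sum_congr rfl fun j _ => ?_
  rw [← sum_filter]
  dsimp only
  rw [Finset.sum_const]
  have : univ.filter (fun i : Fin (k + 1) => i ≠ 0 ∧ i < j) = Ioo 0 j := by
    ext i; simp [Fin.pos_iff_ne_zero]
  rw [this, Fin.card_Ioo, Fin.val_zero, Nat.sub_zero]

namespace SimpleGraph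

variable {V : Type*} {G : SimpleGraph V}

theorem exists_path_support_subset_of_preconnected_induce {s : Set V}
    (h : (G.induce s).Preconnected) {a b : V} (ha : a ∈ s) (hb : b ∈ s) :
    ∃ p : G.Path a b, ∀ x ∈ p.1.support, x ∈ s := by
  classical
  obtain ⟨w⟩ := h ⟨a, ha⟩ ⟨b, hb⟩
  refine ⟨(w.map (Embedding.induce s).toHom).toPath, fun x hx => ?_⟩
  have hx := (w.map (Embedding.induce s).toHom).support_toPath_subset_support hx
  rw [Walk.support_map, List.mem_map] at hx
  obtain ⟨y, -, rfl⟩ := hx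
  exact y.2

theorem IsBridge.mem_edges_of_notMem_support {u v a : V} (hb : G.IsBridge s(u, v))
    (w : G.Walk a u) (hv : v ∉ w.support) (q : G.Walk a v) : s(u, v) ∈ q.edges := by
  by_contra hq
  have := isBridge_iff_forall_walk_mem_edges.mp hb (w.reverse.append q)
  rw [Walk.edges_append, List.mem_append, Walk.edges_reverse, List.mem_reverse] at this
  exact this.elim (fun he => hv (w.snd_mem_support_of_mem_edges he)) hq

section Peeling

variable [LinearOrder V] (hpeel : ∀ t, (G.induce {x | x ≤ t}).Preconnected)
include hpeel

theorem le_of_forall_path_mem_edges {o i a r : V} (hoi : o ≤ i)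
    (h : ∀ q : G.Path o i, s(a, r) ∈ q.1.edges) : r ≤ i := by
  obtain ⟨q, hq⟩ := exists_path_support_subset_of_preconnected_induce (hpeel i) hoi le_rfl
  exact hq r (q.1.snd_mem_support_of_mem_edges (h q))

theorem IsAcyclic.mem_edges_of_adj_of_lt (hG : G.IsAcyclic) {o a i : V} (hoa : o ≤ a)
    (hai : a < i) (hadj : G.Adj a i) (q : G.Walk o i) : s(a, i) ∈ q.edges := by
  obtain ⟨w, hw⟩ := exists_path_support_subset_of_preconnected_induce (hpeel a) hoa le_rfl
  exact (isAcyclic_iff_forall_isBridge.mp hG hadj).mem_edges_of_notMem_support w.1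
    (fun hi => (hw i hi).not_gt hai) q

end Peeling

end SimpleGraph

/-- Let `T` be a tree with `k` edges whose vertices `0, 1, …, k` are listed in a peeling
ordering (every initial segment induces a subtree).  For `i ≠ 0` let `π i` be the (unique)
earlier neighbour of `i`, so that the edge labelled `y_i` is `{π i, i}`, and let `A i` be the
set of indices `j` such that the edge `y_j` lies on the unique path of `T` from `0` to `i`.
Consider the polynomial
`P = ∏_{1 ≤ i < j ≤ k} (y_j² − y_i²) · ∏_{1 ≤ i < j ≤ k} (∑_{r ∈ A i} y_r − ∑_{s ∈ A j} y_s)`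
over `F_p`.  Then the coefficient of the monomial `y_k^{3(k−1)} y_{k−1}^{3(k−2)} ⋯ y_1^0`
in `P` equals `±1`; in particular it is nonzero in `F_p`. -/
theorem peeling_polynomial_coeff
    (p k : ℕ) (hp : p.Prime)
    (T : SimpleGraph (Fin (k + 1))) (hT : T.IsTree)
    (hpeel : ∀ t : Fin (k + 1), (T.induce {x | x ≤ t}).Connected)
    (π : Fin (k + 1) → Fin (k + 1))
    (hπ : ∀ i : Fin (k + 1), i ≠ 0 → π i < i ∧ T.Adj (π i) i)
    (A : Fin (k + 1) → Finset (Fin (k + 1)))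
    (hA : ∀ i j : Fin (k + 1),
      j ∈ A i ↔ (j ≠ 0 ∧ ∀ q : T.Path 0 i, s(π j, j) ∈ q.val.edges)) :
    (((∏ q ∈ Finset.univ.filter
          (fun q : Fin (k + 1) × Fin (k + 1) => q.1 ≠ 0 ∧ q.1 < q.2),
            ((X q.2 : MvPolynomial (Fin (k + 1)) (ZMod p)) ^ 2 - X q.1 ^ 2)) *
        (∏ q ∈ Finset.univ.filter
          (fun q : Fin (k + 1) × Fin (k + 1) => q.1 ≠ 0 ∧ q.1 < q.2),
            ((∑ r ∈ A q.1, X r) - ∑ s ∈ A q.2, X s))).coeff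
        (∑ i : Fin (k + 1), Finsupp.single i (3 * (i.val - 1))) = 1 ∨
      ((∏ q ∈ Finset.univ.filter
          (fun q : Fin (k + 1) × Fin (k + 1) => q.1 ≠ 0 ∧ q.1 < q.2),
            ((X q.2 : MvPolynomial (Fin (k + 1)) (ZMod p)) ^ 2 - X q.1 ^ 2)) *
        (∏ q ∈ Finset.univ.filter
          (fun q : Fin (k + 1) × Fin (k + 1) => q.1 ≠ 0 ∧ q.1 < q.2),
            ((∑ r ∈ A q.1, X r) - ∑ s ∈ A q.2, X s))).coeff
        (∑ i : Fin (k + 1), Finsupp.single i (3 * (i.val - 1))) = -1) ∧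
    ((∏ q ∈ Finset.univ.filter
          (fun q : Fin (k + 1) × Fin (k + 1) => q.1 ≠ 0 ∧ q.1 < q.2),
            ((X q.2 : MvPolynomial (Fin (k + 1)) (ZMod p)) ^ 2 - X q.1 ^ 2)) *
        (∏ q ∈ Finset.univ.filter
          (fun q : Fin (k + 1) × Fin (k + 1) => q.1 ≠ 0 ∧ q.1 < q.2),
            ((∑ r ∈ A q.1, X r) - ∑ s ∈ A q.2, X s))).coeff
        (∑ i : Fin (k + 1), Finsupp.single i (3 * (i.val - 1))) ≠ 0 := by
  have : Fact p.Prime := ⟨hp⟩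
  have hle : ∀ i, ∀ r ∈ A i, r ≤ i := fun i r hr =>
    T.le_of_forall_path_mem_edges (fun t => (hpeel t).preconnected) (Fin.zero_le i)
      ((hA i r).1 hr).2
  have hself : ∀ i, i ≠ 0 → i ∈ A i := fun i hi =>
    (hA i i).2 ⟨hi, fun q => hT.isAcyclic.mem_edges_of_adj_of_lt
      (fun t => (hpeel t).preconnected) (Fin.zero_le _) (hπ i hi).1 (hπ i hi).2 q.1⟩
  have hcoeff := MonomialOrder.coeff_prod_X_sq_sub_mul_prod_sum_X_sub (R := ZMod p)
    (univ.filter fun q : Fin (k + 1) × Fin (k + 1) => q.1 ≠ 0 ∧ q.1 < q.2) A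
    (fun q hq => (mem_filter.mp hq).2.2) hle
    (fun q hq => hself q.2 ((Fin.zero_le q.1).trans_lt (mem_filter.mp hq).2.2).ne')
  have hidx : ∑ i : Fin (k + 1), Finsupp.single i (3 * (i.val - 1)) =
      ∑ q ∈ univ.filter (fun q : Fin (k + 1) × Fin (k + 1) => q.1 ≠ 0 ∧ q.1 < q.2),
        Finsupp.single q.2 3 := by
    rw [Fin.sum_filter_ne_zero_lt_snd k fun i => Finsupp.single i 3]
    simp only [Finsupp.smul_single, smul_eq_mul, mul_comm]
  rw [hidx, hcoeff]
  exact ⟨neg_one_pow_eq_or _ _, pow_ne_zero _ (neg_ne_zero.mpr one_ne_zero)⟩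
end

section
/- Let p be a prime and k < p. For every sequence a_1, …, a_k of elements of Z_p (repetitions allowed) and every set {b_1, …, b_k} of k distinct elements of Z_p, there exists a permutation σ of {1, …, k} such that the sums a_1 + b_{σ(1)}, …, a_k + b_{σ(k)} are pairwise distinct. -/
/-!
Alon's proof via the Combinatorial Nullstellensatz. Let `V(x) = ∏_{i<j} (x_j - x_i)` and
`W(x) = ∏_{i<j} (x_j + a_j - x_i - a_i)`. The polynomial `V W` has degree `k(k-1)`, and its
top-degree part is that of `V²`, whose coefficient at `∏ x_i^{k-1}` is `± k!` (expand both
Vandermonde determinants: only pairs of permutations `σ, rev ∘ σ` contribute). Since `k < p` this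
is nonzero, so `V W` does not vanish at some point `x` of `{b_1, …, b_k}^k`. Then the `x_i` are
distinct, i.e. `x = b ∘ σ` for a permutation `σ`, and the `x_i + a_i` are distinct.
-/

open Finset MvPolynomial

theorem Fin.val_add_val_eq_sub_one_iff {k : ℕ} {i j : Fin k} :
    (i : ℕ) + j = k - 1 ↔ j = i.rev := by
  rw [Fin.ext_iff, Fin.val_rev]
  omega

theorem Function.Injective.exists_perm_comp_eq {α ι : Type*} [Finite ι] {b x : ι → α}
    (hx : Function.Injective x) (hxb : Set.range x ⊆ Set.range b) :
    ∃ σ : Equiv.Perm ι, b ∘ σ = x := by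
  choose g hg using fun i => hxb (Set.mem_range_self i)
  have hg_inj : Function.Injective g := fun i j hij => hx (by rw [← hg i, ← hg j, hij])
  exact ⟨Equiv.ofBijective g (Finite.injective_iff_bijective.mp hg_inj), funext hg⟩

namespace MvPolynomial

variable {R σ ι : Type*} [CommRing R]

theorem totalDegree_prod_sub_prod_lt {s : Finset ι} (hs : s.Nonempty)
    {f g : ι → MvPolynomial σ R} {d : ι → ℕ}
    (hf : ∀ i ∈ s, (f i).totalDegree ≤ d i) (hgf : ∀ i ∈ s, (g i - f i).totalDegree < d i) :
    (∏ i ∈ s, g i - ∏ i ∈ s, f i).totalDegree < ∑ i ∈ s, d i := by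
  induction hs using Finset.Nonempty.cons_induction with
  | singleton i => simpa using hgf i (mem_singleton_self i)
  | cons i s _ _ ih =>
    simp only [mem_cons, forall_eq_or_imp] at hf hgf
    have hg : ∀ j ∈ s, (g j).totalDegree ≤ d j := fun j hj =>
      calc (g j).totalDegree = (f j + (g j - f j)).totalDegree := by rw [add_sub_cancel]
        _ ≤ d j := (totalDegree_add _ _).trans (max_le (hf.2 j hj) (hgf.2 j hj).le)
    have hprod : (∏ j ∈ s, g j).totalDegree ≤ ∑ j ∈ s, d j :=
      (totalDegree_finsetProd _ _).trans (sum_le_sum hg)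
    have hdiff := ih hf.2 hgf.2
    rw [prod_cons, prod_cons, sum_cons,
      show g i * ∏ j ∈ s, g j - f i * ∏ j ∈ s, f j
        = (g i - f i) * ∏ j ∈ s, g j + f i * (∏ j ∈ s, g j - ∏ j ∈ s, f j) by ring]
    refine (totalDegree_add _ _).trans_lt (max_lt ?_ ?_)
    · exact (totalDegree_mul _ _).trans_lt (by have := hgf.1; omega)
    · exact (totalDegree_mul _ _).trans_lt (by have := hf.1; omega)

theorem coeff_prod_eq_of_totalDegree_sub_lt {s : Finset ι} {f g : ι → MvPolynomial σ R}
    {d : ι → ℕ} (hf : ∀ i ∈ s, (f i).totalDegree ≤ d i)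
    (hgf : ∀ i ∈ s, (g i - f i).totalDegree < d i) {m : σ →₀ ℕ} (hm : ∑ i ∈ s, d i ≤ m.degree) :
    coeff m (∏ i ∈ s, g i) = coeff m (∏ i ∈ s, f i) := by
  obtain rfl | hs := s.eq_empty_or_nonempty
  · simp
  rw [← sub_eq_zero, ← coeff_sub]
  exact coeff_eq_zero_of_totalDegree_lt ((totalDegree_prod_sub_prod_lt hs hf hgf).trans_le hm)

variable {k : ℕ}

noncomputable def shiftedVandermonde (c : Fin k → R) : MvPolynomial (Fin k) R :=
  (Matrix.vandermonde fun i => X i + C (c i)).det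

theorem shiftedVandermonde_eq_prod (c : Fin k → R) :
    shiftedVandermonde c =
      ∏ q ∈ univ.sigma fun i => Ioi i, (X q.2 - X q.1 + C (c q.2 - c q.1)) := by
  rw [shiftedVandermonde, Matrix.det_vandermonde, prod_sigma]
  refine prod_congr rfl fun i _ => prod_congr rfl fun j _ => ?_
  rw [map_sub]
  ring

theorem eval_shiftedVandermonde_ne_zero_iff [IsDomain R] {c x : Fin k → R} :
    eval x (shiftedVandermonde c) ≠ 0 ↔ Function.Injective (x + c) := by
  rw [shiftedVandermonde, RingHom.map_det, ← Matrix.det_vandermonde_ne_zero_iff]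
  congr!
  ext i j
  simp [Matrix.vandermonde_apply]

theorem shiftedVandermonde_zero_eq_sum :
    shiftedVandermonde (0 : Fin k → R) = ∑ σ : Equiv.Perm (Fin k),
      monomial (Finsupp.equivFunOnFinite.symm fun i => (σ i : ℕ))
        ((Equiv.Perm.sign σ : ℤ) : R) := by
  rw [shiftedVandermonde, ← Matrix.det_transpose, Matrix.det_apply]
  refine sum_congr rfl fun σ _ => ?_
  rw [Units.smul_def, zsmul_eq_mul, ← map_intCast (C : R →+* MvPolynomial (Fin k) R),
    ← mul_one ((Equiv.Perm.sign σ : ℤ) : R), ← C_mul_monomial, monomial_eq,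
    Finsupp.prod_fintype _ _ (fun i => pow_zero _)]
  simp [Matrix.vandermonde_apply]

theorem coeff_shiftedVandermonde_zero_sq :
    coeff (Finsupp.equivFunOnFinite.symm fun _ => k - 1) (shiftedVandermonde (0 : Fin k → R) ^ 2)
      = k.factorial * ((Equiv.Perm.sign (Fin.revPerm (n := k)) : ℤ) : R) := by
  have hexp (σ τ : Equiv.Perm (Fin k)) :
      (Finsupp.equivFunOnFinite.symm fun i => (σ i : ℕ)) +
          Finsupp.equivFunOnFinite.symm (fun i => (τ i : ℕ)) =
        Finsupp.equivFunOnFinite.symm (fun _ => k - 1) ↔ τ = Fin.revPerm * σ := by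
    simp [Finsupp.ext_iff, Equiv.ext_iff, Fin.val_add_val_eq_sub_one_iff]
  simp only [sq, shiftedVandermonde_zero_eq_sum, sum_mul_sum, monomial_mul, coeff_sum,
    coeff_monomial, hexp, sum_ite_eq', mem_univ, if_true]
  have hsign (σ : Equiv.Perm (Fin k)) :
      ((Equiv.Perm.sign σ : ℤ) : R) * ((Equiv.Perm.sign (Fin.revPerm * σ) : ℤ) : R) =
        ((Equiv.Perm.sign (Fin.revPerm (n := k)) : ℤ) : R) := by
    rw [← Int.cast_mul, ← Units.val_mul, Equiv.Perm.sign_mul, mul_left_comm, Int.units_mul_self,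
      mul_one]
  simp only [hsign, sum_const, card_univ, Fintype.card_perm, Fintype.card_fin, nsmul_eq_mul]

theorem two_mul_card_sigma_Ioi : 2 * #(univ.sigma fun i : Fin k => Ioi i) = k * (k - 1) := by
  simp only [card_sigma, Fin.card_Ioi]
  rw [Fin.sum_univ_eq_sum_range (fun i => k - 1 - i), sum_range_reflect (fun i => i) k, mul_comm,
    sum_range_id_mul_two]

theorem totalDegree_X_sub_X_le (i j : σ) : (X j - X i : MvPolynomial σ R).totalDegree ≤ 1 :=
  ((isHomogeneous_X R j).sub (isHomogeneous_X R i)).totalDegree_le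

theorem totalDegree_X_sub_X_mul_le (i j : σ) (e : R) :
    ((X j - X i) * (X j - X i + C e)).totalDegree ≤ 2 := by
  refine (totalDegree_mul _ _).trans (add_le_add (totalDegree_X_sub_X_le i j) ?_ : _ ≤ 1 + 1)
  exact (totalDegree_add _ _).trans (max_le (totalDegree_X_sub_X_le i j) (by simp))

theorem shiftedVandermonde_zero_mul_eq_prod (c : Fin k → R) :
    shiftedVandermonde 0 * shiftedVandermonde c = ∏ q ∈ univ.sigma fun i => Ioi i,
      (X q.2 - X q.1) * (X q.2 - X q.1 + C (c q.2 - c q.1)) := by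
  simp [shiftedVandermonde_eq_prod, prod_mul_distrib]

theorem totalDegree_shiftedVandermonde_zero_mul_le (c : Fin k → R) :
    (shiftedVandermonde 0 * shiftedVandermonde c).totalDegree ≤ k * (k - 1) := by
  rw [shiftedVandermonde_zero_mul_eq_prod, ← two_mul_card_sigma_Ioi, mul_comm, ← smul_eq_mul,
    ← sum_const]
  exact (totalDegree_finsetProd _ _).trans
    (sum_le_sum fun q _ => totalDegree_X_sub_X_mul_le q.1 q.2 _)

theorem coeff_shiftedVandermonde_zero_mul (c : Fin k → R) {m : Fin k →₀ ℕ}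
    (hm : k * (k - 1) ≤ m.degree) :
    coeff m (shiftedVandermonde 0 * shiftedVandermonde c) = coeff m (shiftedVandermonde 0 ^ 2) := by
  have hf (q : Σ _ : Fin k, Fin k) := totalDegree_X_sub_X_mul_le (R := R) q.1 q.2 0
  have hgf (q : Σ _ : Fin k, Fin k) :
      ((X q.2 - X q.1) * (X q.2 - X q.1 + C (c q.2 - c q.1)) -
        (X q.2 - X q.1) * (X q.2 - X q.1 + C 0) : MvPolynomial (Fin k) R).totalDegree < 2 := by
    rw [← mul_sub, add_sub_add_left_eq_sub, ← map_sub]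
    exact (totalDegree_mul _ _).trans_lt <|
      (add_le_add (totalDegree_X_sub_X_le _ _) (totalDegree_C _).le).trans_lt one_lt_two
  have key := coeff_prod_eq_of_totalDegree_sub_lt (s := univ.sigma fun i => Ioi i) (m := m)
    (fun q _ => hf q) (fun q _ => hgf q)
    (by rwa [sum_const, smul_eq_mul, mul_comm, two_mul_card_sigma_Ioi])
  rw [sq, shiftedVandermonde_zero_mul_eq_prod, shiftedVandermonde_zero_mul_eq_prod]
  simpa using key

end MvPolynomial

/-- (Alon) Let `p` be a prime and `k < p`. For every sequence `a_1, …, a_k` of elements of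
`ℤ_p` (repetitions allowed) and every set `{b_1, …, b_k}` of `k` distinct elements of `ℤ_p`,
there is a permutation `σ` of `{1, …, k}` such that the sums `a_i + b_{σ(i)}` are pairwise
distinct. -/
theorem exists_perm_sums_distinct
    (p k : ℕ) (hp : p.Prime) (hk : k < p)
    (a : Fin k → ZMod p) (b : Fin k → ZMod p) (hb : Function.Injective b) :
    ∃ σ : Equiv.Perm (Fin k), Function.Injective fun i => a i + b (σ i) := by
  have : Fact p.Prime := ⟨hp⟩
  set t : Fin k →₀ ℕ := Finsupp.equivFunOnFinite.symm fun _ => k - 1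
  have ht : t.degree = k * (k - 1) := by simp [t, Finsupp.degree_eq_sum]
  have hcoeff : coeff t (shiftedVandermonde 0 * shiftedVandermonde a) ≠ 0 := by
    rw [coeff_shiftedVandermonde_zero_mul a ht.ge, coeff_shiftedVandermonde_zero_sq]
    refine mul_ne_zero ?_ ((Equiv.Perm.sign _).isUnit.map (Int.castRingHom (ZMod p))).ne_zero
    rw [Ne, ZMod.natCast_eq_zero_iff, hp.dvd_factorial]
    omega
  have hdeg : (shiftedVandermonde 0 * shiftedVandermonde a).totalDegree = t.degree :=
    le_antisymm (ht ▸ totalDegree_shiftedVandermonde_zero_mul_le a)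
      (le_totalDegree (mem_support_iff.mpr hcoeff))
  obtain ⟨x, hxb, hx⟩ := combinatorial_nullstellensatz_exists_eval_nonzero _ t hcoeff hdeg
    (fun _ => univ.image b) (fun i => by
      rw [card_image_of_injective _ hb, card_univ, Fintype.card_fin]
      exact Nat.sub_lt i.pos one_pos)
  rw [map_mul] at hx
  have hx_inj := eval_shiftedVandermonde_ne_zero_iff.mp (left_ne_zero_of_mul hx)
  have hxa_inj := eval_shiftedVandermonde_ne_zero_iff.mp (right_ne_zero_of_mul hx)
  rw [add_zero] at hx_inj
  obtain ⟨σ, hσ⟩ := hx_inj.exists_perm_comp_eq (b := b)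
    (Set.range_subset_iff.mpr fun i => by simpa using hxb i)
  rw [← hσ, add_comm] at hxa_inj
  exact ⟨σ, hxa_inj⟩
end

section
/- Let r ≥ 2 be an integer. Let M_a be the r × r matrix with entry r(i−1) + j in row i and column j (so its entries, read row by row, are 1, 2, …, r²), and let M_b be an r × r matrix whose entries σ_1, …, σ_{r²} (read row by row) form a permutation of {1, …, r²}. Then one can permute the entries within each column of the r × 2r matrix M = (M_a | M_b) (independently in each of the 2r columns) so that in the resulting matrix M′ no row contains a repeated entry. -/
/-!
Regard each value `v` as an edge of a bipartite multigraph joining the column of `Ma` and the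
column of `Mb` that contain `v`. Every column has `r` entries, so this multigraph is `r`-regular
and, by König's theorem (peel off perfect matchings found by Hall's theorem), its edges admit a
colouring `φ` with `r` colours in which the edges at any vertex have distinct colours. Put `v` in
row `φ v` of its `Ma`-column and in row `φ v + 1 (mod r)` of its `Mb`-column: each column is
permuted, and as `r ≥ 2` the two copies of a value land in different rows, while distinct values
never collide.
-/

open Finset Function

section BipartiteMultigraph

variable {ε α β : Type*}

/-- With `E` the edge set of a bipartite multigraph and `L` the map sending an edge to its endpoint
on one side, `HasFiberCard E L k` says that every vertex on that side has degree `k`. -/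
def HasFiberCard [DecidableEq α] (E : Finset ε) (L : ε → α) (k : ℕ) : Prop :=
  ∀ a, #{e ∈ E | L e = a} = k

theorem injOn_ite_of_injOn_sdiff [DecidableEq ε] {E M : Finset ε} [DecidablePred (· ∈ M)]
    {L : ε → α} {φ : ε → ℕ} {k : ℕ} (hM : Set.InjOn L M)
    (hφ : Set.InjOn (fun e => (L e, φ e)) ↑(E \ M)) (hlt : ∀ e ∈ E \ M, φ e < k) :
    Set.InjOn (fun e => (L e, if e ∈ M then k else φ e)) E := by
  intro e he e' he' h
  simp only [Prod.mk.injEq] at h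
  obtain ⟨hL, hφe⟩ := h
  by_cases heM : e ∈ M <;> by_cases he'M : e' ∈ M <;>
    simp only [heM, he'M, if_true, if_false] at hφe
  · exact hM heM he'M hL
  · exact absurd hφe.symm (hlt e' (mem_sdiff.2 ⟨he', he'M⟩)).ne
  · exact absurd hφe (hlt e (mem_sdiff.2 ⟨he, heM⟩)).ne
  · exact hφ (mem_sdiff.2 ⟨he, heM⟩) (mem_sdiff.2 ⟨he', he'M⟩) (Prod.ext hL hφe)

variable [DecidableEq α] {E M : Finset ε} {L : ε → α} {k : ℕ}

theorem HasFiberCard.card_filter_mem (h : HasFiberCard E L k) (S : Finset α) :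
    #{e ∈ E | L e ∈ S} = #S * k := by
  rw [card_eq_sum_card_fiberwise (s := {e ∈ E | L e ∈ S}) (t := S)
    fun e he => (mem_filter.1 he).2, ← smul_eq_mul, ← sum_const]
  refine sum_congr rfl fun a ha => ?_
  rw [filter_filter, ← h a]
  congr 1
  ext e
  simp only [mem_filter]
  grind

theorem HasFiberCard.sdiff [DecidableEq ε] (hE : HasFiberCard E L (k + 1))
    (hM : HasFiberCard M L 1) (hME : M ⊆ E) : HasFiberCard (E \ M) L k := by
  intro a
  have : {e ∈ E \ M | L e = a} = {e ∈ E | L e = a} \ {e ∈ M | L e = a} := by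
    ext
    simp only [mem_filter, mem_sdiff]
    tauto
  rw [this, card_sdiff_of_subset (filter_subset_filter _ hME), hE a, hM a]
  rfl

theorem HasFiberCard.injOn (h : HasFiberCard M L 1) : Set.InjOn L M := fun e he e' he' hee' =>
  card_le_one.1 (h (L e)).le e (mem_filter.2 ⟨he, rfl⟩) e' (mem_filter.2 ⟨he', hee'.symm⟩)

theorem HasFiberCard.comp_equiv {ε' : Type*} [Fintype ε] [Fintype ε'] (h : HasFiberCard univ L k)
    (e : ε' ≃ ε) : HasFiberCard univ (L ∘ e) k := fun a =>
  (card_equiv e (by simp)).trans (h a)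

theorem hasFiberCard_univ_snd {ι κ : Type*} [Fintype ι] [Fintype κ] [DecidableEq κ] :
    HasFiberCard (univ : Finset (ι × κ)) Prod.snd (Fintype.card ι) := by
  intro c
  trans #((univ : Finset ι) ×ˢ {c})
  · congr 1
    ext ⟨a, b⟩
    simp [eq_comm]
  · simp

theorem hasFiberCard_image_univ_one {ι : Type*} [Fintype ι] [DecidableEq ε] {g : ι → ε}
    {h : ι → α} (hh : Bijective h) (hg : ∀ i, L (g i) = h i) :
    HasFiberCard (univ.image g) L 1 := by
  intro a
  obtain ⟨i, rfl⟩ := hh.2 a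
  rw [card_eq_one]
  refine ⟨g i, ?_⟩
  ext e
  simp only [mem_filter, mem_image, mem_univ, true_and, mem_singleton]
  constructor
  · rintro ⟨⟨i', rfl⟩, hi'⟩
    rw [hh.1 ((hg i').symm.trans hi')]
  · rintro rfl
    exact ⟨⟨i, rfl⟩, hg i⟩

variable [Fintype α] [Fintype β] [DecidableEq β] {R : ε → β}

theorem HasFiberCard.exists_perfect_matching (hL : HasFiberCard E L k) (hR : HasFiberCard E R k)
    (hk : 0 < k) : ∃ M ⊆ E, HasFiberCard M L 1 ∧ HasFiberCard M R 1 := by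
  classical
  let t a := image R {e ∈ E | L e = a}
  have hall : ∀ S, #S ≤ #(S.biUnion t) := by
    intro S
    have hsub : {e ∈ E | L e ∈ S} ⊆ {e ∈ E | R e ∈ S.biUnion t} := by
      intro e
      simp only [mem_filter, mem_biUnion, mem_image, t]
      exact fun ⟨he, hS⟩ => ⟨he, L e, hS, e, ⟨he, rfl⟩, rfl⟩
    -- the `#S * k` edges at `S` all end in its neighbourhood, which has `k` edges per vertex
    have hcount := card_le_card hsub
    rw [hL.card_filter_mem, hR.card_filter_mem] at hcount
    exact le_of_mul_le_mul_right hcount hk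
  obtain ⟨f, hf, hft⟩ := (all_card_le_biUnion_card_iff_exists_injective t).1 hall
  have hcard : Fintype.card α = Fintype.card β := by
    have hα := hL.card_filter_mem univ
    have hβ := hR.card_filter_mem univ
    simp only [mem_univ, filter_true, card_univ] at hα hβ
    exact Nat.eq_of_mul_eq_mul_right hk (hα.symm.trans hβ)
  have hfbij : Bijective f := hf.bijective_of_nat_card_le (by simp [hcard])
  choose g hgE hgL hgR using fun a =>
    (by simpa [t, and_assoc] using hft a : ∃ e ∈ E, L e = a ∧ R e = f a)
  exact ⟨univ.image g, image_subset_iff.2 fun a _ => hgE a,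
    hasFiberCard_image_univ_one bijective_id hgL, hasFiberCard_image_univ_one hfbij hgR⟩

/-- König's edge colouring theorem for regular bipartite multigraphs. -/
theorem HasFiberCard.exists_coloring (hL : HasFiberCard E L k) (hR : HasFiberCard E R k) :
    ∃ φ : ε → ℕ, (∀ e ∈ E, φ e < k) ∧ Set.InjOn (fun e => (L e, φ e)) E ∧
      Set.InjOn (fun e => (R e, φ e)) E := by
  classical
  induction k generalizing E with
  | zero =>
    have hE : E = ∅ := eq_empty_of_forall_notMem fun e he =>
      notMem_empty e <| (card_eq_zero.1 (hL (L e))).subset (mem_filter.2 ⟨he, rfl⟩)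
    subst hE
    exact ⟨0, by simp, by simp, by simp⟩
  | succ k ih =>
    obtain ⟨M, hME, hML, hMR⟩ := hL.exists_perfect_matching hR k.succ_pos
    obtain ⟨φ, hlt, hφL, hφR⟩ := ih (hL.sdiff hML hME) (hR.sdiff hMR hME)
    refine ⟨fun e => if e ∈ M then k else φ e, fun e he => ?_,
      injOn_ite_of_injOn_sdiff hML.injOn hφL hlt, injOn_ite_of_injOn_sdiff hMR.injOn hφR hlt⟩
    dsimp only
    split_ifs with heM
    · exact k.lt_succ_self
    · exact (hlt e (mem_sdiff.2 ⟨he, heM⟩)).trans k.lt_succ_self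

end BipartiteMultigraph

theorem exists_perm_comp_eq_of_range_subset {ι γ : Type*} [Finite ι] {f g : ι → γ}
    (hf : Injective f) (h : Set.range f ⊆ Set.range g) : ∃ e : Equiv.Perm ι, g ∘ e = f := by
  choose e he using fun i => h ⟨i, rfl⟩
  have he_inj : Injective e := fun i i' hii' => hf (by rw [← he, ← he, hii'])
  exact ⟨Equiv.ofBijective e (Finite.injective_iff_bijective.1 he_inj), funext he⟩

theorem exists_perms_forall_apply_eq {ι κ : Type*} [Finite ι] (f : κ → ι → ι)
    (hf : ∀ j, Injective (f j)) : ∃ π : κ → Equiv.Perm ι, ∀ j i, f j (π j i) = i :=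
  ⟨fun j => (Equiv.ofBijective (f j) (Finite.injective_iff_bijective.1 (hf j))).symm,
    fun j => (Equiv.ofBijective (f j) _).apply_symm_apply⟩

theorem exists_column_perms_injective_sumElim {r : ℕ} (hr : 2 ≤ r) {γ : Type*}
    (A B : Fin r → Fin r → γ) (hA : Injective (uncurry A)) (hB : Injective (uncurry B))
    (hAB : Set.range (uncurry A) ⊆ Set.range (uncurry B)) :
    ∃ πa πb : Fin r → Equiv.Perm (Fin r),
      ∀ i, Injective (Sum.elim (fun j => A (πa j i) j) (fun j => B (πb j i) j)) := by
  classical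
  obtain ⟨e, he⟩ := exists_perm_comp_eq_of_range_subset hA hAB
  have hL : HasFiberCard (univ : Finset (Fin r × Fin r)) Prod.snd r := by
    simpa using hasFiberCard_univ_snd (ι := Fin r) (κ := Fin r)
  obtain ⟨φ, hlt, hφL, hφR⟩ := hL.exists_coloring (R := fun p => (e p).2) (hL.comp_equiv e)
  let col (p : Fin r × Fin r) : Fin r := ⟨φ p, hlt p (mem_univ p)⟩
  obtain ⟨πa, hπa⟩ := exists_perms_forall_apply_eq (fun c b => col (b, c)) fun c b b' h =>
    congrArg Prod.fst
      (hφL (mem_univ (b, c)) (mem_univ (b', c)) (Prod.ext rfl (congrArg Fin.val h)))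
  obtain ⟨πb, hπb⟩ :=
    exists_perms_forall_apply_eq (fun j m => finRotate r (col (e.symm (m, j)))) fun j m m' h => by
      have := hφR (mem_univ (e.symm (m, j))) (mem_univ (e.symm (m', j)))
        (Prod.ext (by simp) (congrArg Fin.val ((finRotate r).injective h)))
      simpa using this
  refine ⟨πa, πb, fun i => Injective.sumElim
    (fun c c' h => congrArg Prod.snd (@hA (_, c) (_, c') h))
    (fun j j' h => congrArg Prod.snd (@hB (_, j) (_, j') h)) fun c j h => ?_⟩
  have hpos : e (πa c i, c) = (πb j i, j) := hB ((congrFun he _).trans h)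
  have hrot := hπb j i
  rw [← hpos, e.symm_apply_apply, hπa c i] at hrot
  exact Equiv.Perm.mem_support.1 (support_finRotate_of_le hr ▸ mem_univ i) hrot

/-- Let `r ≥ 2`. Let `Ma` be the `r × r` matrix whose entries, read row by row, are
`1, 2, …, r²`, and let `Mb` be an `r × r` matrix whose entries form a permutation of
`{1, …, r²}`. Then one can permute the entries within each of the `2r` columns of the
`r × 2r` matrix `(Ma | Mb)` (independently in each column) so that no row of the resulting
matrix contains a repeated entry. -/
theorem column_permutations_no_repeated_row_entries
    (r : ℕ) (hr : 2 ≤ r)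
    (Ma Mb : Fin r → Fin r → ℕ)
    (hMa : ∀ i j : Fin r, Ma i j = r * i.val + j.val + 1)
    (hMb_inj : Function.Injective (fun q : Fin r × Fin r => Mb q.1 q.2))
    (hMb_range : ∀ i j : Fin r, Mb i j ∈ Finset.Icc 1 (r * r)) :
    ∃ πa πb : Fin r → Equiv.Perm (Fin r),
      ∀ i : Fin r, Function.Injective
        (Sum.elim (fun j : Fin r => Ma (πa j i) j) (fun j : Fin r => Mb (πb j i) j)) := by
  have hMa_eq (p : Fin r × Fin r) : uncurry Ma p = finProdFinEquiv p + 1 := by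
    rw [uncurry_apply_pair, hMa, finProdFinEquiv_apply_val]
    ring
  have hMa_inj : Injective (uncurry Ma) := fun p q h =>
    finProdFinEquiv.injective (Fin.ext (by simpa [hMa_eq] using h))
  refine exists_column_perms_injective_sumElim hr Ma Mb hMa_inj hMb_inj ?_
  rintro _ ⟨p, rfl⟩
  have hmem : uncurry Ma p ∈ Icc 1 (r * r) := by
    simp only [hMa_eq, mem_Icc]
    exact ⟨by omega, (finProdFinEquiv p).isLt⟩
  obtain ⟨q, -, hq⟩ := surj_on_of_inj_on_of_card_le (s := univ) (fun q _ => uncurry Mb q)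
    (fun q _ => hMb_range q.1 q.2) (fun _ _ _ _ h => hMb_inj h) (by simp) _ hmem
  exact ⟨q, hq.symm⟩
end
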